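/- arXiv:1501.00437 — 4 statements merged into one kernel-verified Lean document; each statement's English description precedes it below -/
import Mathlib

section
/- For any (1+α)-weakly-deletion-stable k-median instance, for any center c_i of its optimal clustering and any data point x not in cluster C_i, d(x, c_i) ≥ α·OPT/(2|C_i|). -/
open Finset

/-- In a (1+α)-weakly-deletion-stable k-median instance, any point `x` outside the
optimal cluster `C i` satisfies `d(x, c i) ≥ α·OPT/(2·|C i|)`. -/
theorem wds_kmedian_points_far_from_other_centers {Y : Type*} [MetricSpace Y] {k : ℕ}
    (X : Finset Y) (C : Fin k → Finset Y) (c : Fin k → Y)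
    (hsub : ∀ i, C i ⊆ X) (hcover : ∀ x ∈ X, ∃ i, x ∈ C i)
    (hdisj : ∀ i j, i ≠ j → Disjoint (C i) (C j))
    (hcenters : ∀ i, c i ∈ X)
    (OPT : ℝ) (hOPT : OPT = ∑ i, ∑ x ∈ C i, dist x (c i))
    (hopt : ∀ c' : Fin k → Y, (∀ i, c' i ∈ X) → OPT ≤ ∑ x ∈ X, ⨅ i, dist x (c' i))
    (α : ℝ) (hα : 0 < α)
    (hWDS : ∀ i j, i ≠ j →
      (1 + α) * OPT < OPT - (∑ x ∈ C i, dist x (c i)) + ∑ x ∈ C i, dist x (c j)) :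
    ∀ i, ∀ x ∈ X, x ∉ C i → α * OPT / (2 * ((C i).card : ℝ)) ≤ dist x (c i) := by
  classical
  intro i x hxX hxCi
  obtain ⟨j, hxj⟩ := hcover x hxX
  have hij : i ≠ j := fun h => hxCi (h ▸ hxj)
  haveI : Nonempty (Fin k) := ⟨j⟩
  set f : Y → ℝ := fun y => ⨅ m, dist y (c m) with hf
  have hfle : ∀ y, ∀ m, f y ≤ dist y (c m) := fun y m =>
    ciInf_le (Finite.bddBelow_range _) m
  have hX : X = Finset.univ.biUnion C := by
    apply Finset.Subset.antisymm
    · intro y hy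
      obtain ⟨l, hl⟩ := hcover y hy
      exact Finset.mem_biUnion.mpr ⟨l, Finset.mem_univ l, hl⟩
    · intro y hy
      obtain ⟨l, _, hl⟩ := Finset.mem_biUnion.mp hy
      exact hsub l hl
  have hdisj' : ∀ l ∈ (Finset.univ : Finset (Fin k)), ∀ m ∈ (Finset.univ : Finset (Fin k)),
      l ≠ m → Disjoint (C l) (C m) := fun l _ m _ h => hdisj l m h
  have hsumX : ∑ y ∈ X, f y = ∑ l, ∑ y ∈ C l, f y := by
    rw [hX]; exact Finset.sum_biUnion hdisj'
  have h1 : OPT ≤ ∑ l, ∑ y ∈ C l, f y := by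
    rw [← hsumX]; exact hopt c hcenters
  have h2 : ∑ l, ∑ y ∈ C l, f y ≤ OPT := by
    rw [hOPT]
    exact Finset.sum_le_sum fun l _ => Finset.sum_le_sum fun y _ => hfle y l
  have heq : ∑ l, ∑ y ∈ C l, f y = ∑ l, ∑ y ∈ C l, dist y (c l) := by
    rw [← hOPT]; linarith
  have hinner : ∑ y ∈ C j, f y = ∑ y ∈ C j, dist y (c j) :=
    ((Finset.sum_eq_sum_iff_of_le (fun l _ =>
      Finset.sum_le_sum fun y _ => hfle y l)).mp heq) j (Finset.mem_univ j)
  have hx : f x = dist x (c j) :=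
    ((Finset.sum_eq_sum_iff_of_le (fun y _ => hfle y j)).mp hinner) x hxj
  have hxle : dist x (c j) ≤ dist x (c i) := hx ▸ hfle x i
  -- WDS gives a lower bound on d(c i, c j)
  have hW := hWDS i j hij
  have htri : ∑ y ∈ C i, dist y (c j) ≤
      ∑ y ∈ C i, dist y (c i) + (C i).card * dist (c i) (c j) := by
    calc ∑ y ∈ C i, dist y (c j) ≤ ∑ y ∈ C i, (dist y (c i) + dist (c i) (c j)) :=
          Finset.sum_le_sum fun y _ => dist_triangle y (c i) (c j)
      _ = ∑ y ∈ C i, dist y (c i) + (C i).card * dist (c i) (c j) := by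
          rw [Finset.sum_add_distrib, Finset.sum_const, nsmul_eq_mul]
  have hmain : α * OPT < (C i).card * dist (c i) (c j) := by nlinarith
  have hcc : dist (c i) (c j) ≤ 2 * dist x (c i) := by
    calc dist (c i) (c j) ≤ dist (c i) x + dist x (c j) := dist_triangle _ _ _
      _ ≤ dist x (c i) + dist x (c i) := by rw [dist_comm (c i) x]; linarith
      _ = 2 * dist x (c i) := by ring
  rcases Nat.eq_zero_or_pos (C i).card with h0 | hpos
  · rw [h0]
    simp
  · have hn : (0:ℝ) < ((C i).card : ℝ) := by exact_mod_cast hpos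
    rw [div_le_iff₀ (by positivity)]
    nlinarith [dist_nonneg (x := c i) (y := c j)]
end

section
/- For any (1+α)-weakly-deletion-stable k-means instance, for any center c_i of its optimal clustering and any data point x not in cluster C_i, d²(x, c_i) ≥ α·OPT/(4|C_i|). -/
open Finset

lemma centroid_identity {E : Type*} [NormedAddCommGroup E] [InnerProductSpace ℝ E]
    (S : Finset E) (hS : S.Nonempty) (c : E) :
    ∑ y ∈ S, dist y c ^ 2
      = (∑ y ∈ S, dist y ((S.card : ℝ)⁻¹ • ∑ x ∈ S, x) ^ 2)
        + (S.card : ℝ) * dist ((S.card : ℝ)⁻¹ • ∑ x ∈ S, x) c ^ 2 := by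
  set μ := (S.card : ℝ)⁻¹ • ∑ x ∈ S, x with hμ
  have hcard : (S.card : ℝ) ≠ 0 := Nat.cast_ne_zero.mpr (Finset.card_ne_zero_of_mem hS.choose_spec)
  have hsum : ∑ y ∈ S, (y - μ) = 0 := by
    rw [Finset.sum_sub_distrib, Finset.sum_const, hμ]
    rw [← Nat.cast_smul_eq_nsmul ℝ, smul_smul, mul_inv_cancel₀ hcard, one_smul, sub_self]
  have hterm : ∀ y ∈ S, dist y c ^ 2
      = ‖y - μ‖ ^ 2 + 2 * inner ℝ (y - μ) (μ - c) + ‖μ - c‖ ^ 2 := by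
    intro y _
    rw [dist_eq_norm, show y - c = (y - μ) + (μ - c) by abel, norm_add_sq_real]
  rw [Finset.sum_congr rfl hterm]
  rw [Finset.sum_add_distrib, Finset.sum_add_distrib]
  have h1 : ∑ y ∈ S, 2 * (inner ℝ (y - μ) (μ - c) : ℝ) = 0 := by
    rw [← Finset.mul_sum, ← sum_inner, hsum, inner_zero_left, mul_zero]
  have h2 : ∀ y ∈ S, ‖y - μ‖ ^ 2 = dist y μ ^ 2 := fun y _ => by rw [dist_eq_norm]
  rw [h1, Finset.sum_congr rfl h2, Finset.sum_const, add_zero,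
    nsmul_eq_mul, dist_eq_norm]

/-- In a (1+α)-weakly-deletion-stable k-means instance (centers are the centroids),
any point `x` outside the optimal cluster `C i` satisfies `d²(x, c i) ≥ α·OPT/(4·|C i|)`. -/
theorem wds_kmeans_points_far_from_other_centers {n k : ℕ}
    (X : Finset (EuclideanSpace ℝ (Fin n)))
    (C : Fin k → Finset (EuclideanSpace ℝ (Fin n)))
    (c : Fin k → EuclideanSpace ℝ (Fin n))
    (hsub : ∀ i, C i ⊆ X) (hcover : ∀ x ∈ X, ∃ i, x ∈ C i)
    (hdisj : ∀ i j, i ≠ j → Disjoint (C i) (C j))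
    (hne : ∀ i, (C i).Nonempty)
    (hcent : ∀ i, c i = (((C i).card : ℝ))⁻¹ • ∑ x ∈ C i, x)
    (OPT : ℝ) (hOPT : OPT = ∑ i, ∑ x ∈ C i, dist x (c i) ^ 2)
    (hopt : ∀ c' : Fin k → EuclideanSpace ℝ (Fin n),
      OPT ≤ ∑ x ∈ X, ⨅ i, dist x (c' i) ^ 2)
    (α : ℝ) (hα : 0 < α)
    (hWDS : ∀ i j, i ≠ j →
      (1 + α) * OPT < OPT - (∑ x ∈ C i, dist x (c i) ^ 2) + ∑ x ∈ C i, dist x (c j) ^ 2) :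
    ∀ i, ∀ x ∈ X, x ∉ C i → α * OPT / (4 * ((C i).card : ℝ)) ≤ dist x (c i) ^ 2 := by
  classical
  intro i x hxX hxCi
  obtain ⟨j, hxj⟩ := hcover x hxX
  have hij : i ≠ j := fun h => hxCi (h ▸ hxj)
  have hcardpos : 0 < ((C i).card : ℝ) := Nat.cast_pos.mpr (Finset.card_pos.mpr (hne i))
  -- Step A: α * OPT < |C i| * dist (c i) (c j) ^ 2
  have hA : α * OPT < ((C i).card : ℝ) * dist (c i) (c j) ^ 2 := by
    have hid := centroid_identity (C i) (hne i) (c j)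
    rw [← hcent i] at hid
    have := hWDS i j hij
    rw [hid] at this
    nlinarith [this]
  -- Step B: dist x (c j) ≤ dist x (c i)
  have hbdd : ∀ y : EuclideanSpace ℝ (Fin n),
      BddBelow (Set.range fun m => dist y (c m) ^ 2) :=
    fun y => (Set.finite_range _).bddBelow
  have hXeq : X = Finset.univ.biUnion C := by
    ext y
    simp only [Finset.mem_biUnion, Finset.mem_univ, true_and]
    exact ⟨fun hy => hcover y hy, fun ⟨m, hm⟩ => hsub m hm⟩
  have hsplit : ∑ y ∈ X, ⨅ m, dist y (c m) ^ 2 = ∑ m, ∑ y ∈ C m, ⨅ m', dist y (c m') ^ 2 := by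
    rw [hXeq]
    exact Finset.sum_biUnion (fun a _ b _ hab => hdisj a b hab)
  have hle : ∀ m : Fin k, ∀ y ∈ C m, (⨅ m', dist y (c m') ^ 2) ≤ dist y (c m) ^ 2 :=
    fun m y _ => ciInf_le (hbdd y) m
  have houter : ∀ m : Fin k, (∑ y ∈ C m, ⨅ m', dist y (c m') ^ 2) ≤ ∑ y ∈ C m, dist y (c m) ^ 2 :=
    fun m => Finset.sum_le_sum (hle m)
  have hge : OPT ≤ ∑ y ∈ X, ⨅ m, dist y (c m) ^ 2 := hopt c
  have hsum_le : ∑ y ∈ X, ⨅ m, dist y (c m) ^ 2 ≤ OPT := by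
    rw [hsplit, hOPT]
    exact Finset.sum_le_sum (fun m _ => houter m)
  have heq : ∑ m, ∑ y ∈ C m, ⨅ m', dist y (c m') ^ 2 = ∑ m, ∑ y ∈ C m, dist y (c m) ^ 2 := by
    rw [← hsplit, ← hOPT]; linarith
  have heq_outer := (Finset.sum_eq_sum_iff_of_le (fun m _ => houter m)).mp heq j (Finset.mem_univ j)
  have heq_inner := (Finset.sum_eq_sum_iff_of_le (hle j)).mp heq_outer x hxj
  have hB2 : dist x (c j) ^ 2 ≤ dist x (c i) ^ 2 := by
    rw [← heq_inner]; exact ciInf_le (hbdd x) i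
  have hB : dist x (c j) ≤ dist x (c i) :=
    (pow_le_pow_iff_left₀ dist_nonneg dist_nonneg two_ne_zero).mp hB2
  -- Step C: triangle inequality
  have htri : dist (c i) (c j) ≤ 2 * dist x (c i) := by
    have := dist_triangle (c i) x (c j)
    rw [dist_comm (c i) x] at this
    linarith
  have hCsq : dist (c i) (c j) ^ 2 ≤ 4 * dist x (c i) ^ 2 := by
    nlinarith [dist_nonneg (x := c i) (y := c j), dist_nonneg (x := x) (y := c i)]
  rw [div_le_iff₀ (by positivity)]
  nlinarith [hA, hCsq, hcardpos]
end

section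
/- If a data set X ⊆ ℝⁿ is ε-separated for k-means (ε < 1), then in the optimal k-means clustering, for every cluster i, the mean squared distance r_i of points in C_i to their center c_i satisfies r_i ≤ (ε²/(1−ε²))·min_{j≠i} ‖c_i − c_j‖². -/
open Finset

/-- k-means cost of centers `c` on instance `X`. -/
noncomputable def kmeansCost {n : ℕ} (X : Finset (EuclideanSpace ℝ (Fin n))) {k : ℕ}
    (c : Fin k → EuclideanSpace ℝ (Fin n)) : ℝ :=
  ∑ x ∈ X, ⨅ i, dist x (c i) ^ 2

/-- Optimal k-means cost of `X`. -/
noncomputable def kmeansOPT {n : ℕ} (X : Finset (EuclideanSpace ℝ (Fin n))) (k : ℕ) : ℝ :=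
  ⨅ c : Fin k → EuclideanSpace ℝ (Fin n), kmeansCost X c


lemma sum_dist_sq_shift {E : Type*} [NormedAddCommGroup E] [InnerProductSpace ℝ E]
    (s : Finset E) (hs : s.Nonempty) (a b : E)
    (ha : a = ((s.card : ℝ))⁻¹ • ∑ x ∈ s, x) :
    ∑ x ∈ s, dist x b ^ 2 = (∑ x ∈ s, dist x a ^ 2) + (s.card : ℝ) * dist a b ^ 2 := by
  have hcard : (s.card : ℝ) ≠ 0 := by
    have := Finset.card_pos.mpr hs
    positivity
  have hzero : ∑ x ∈ s, (x - a) = 0 := by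
    rw [Finset.sum_sub_distrib, Finset.sum_const, ha, ← Nat.cast_smul_eq_nsmul ℝ,
      smul_inv_smul₀ hcard, sub_self]
  have key : ∀ x : E, dist x b ^ 2 =
      dist x a ^ 2 + (2 * inner ℝ (x - a) (a - b) + ‖a - b‖ ^ 2) := by
    intro x
    have : x - b = (x - a) + (a - b) := by abel
    rw [dist_eq_norm, dist_eq_norm, this, norm_add_sq_real]
    ring
  calc ∑ x ∈ s, dist x b ^ 2
      = ∑ x ∈ s, (dist x a ^ 2 + (2 * inner ℝ (x - a) (a - b) + ‖a - b‖ ^ 2)) :=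
        Finset.sum_congr rfl fun x _ => key x
    _ = (∑ x ∈ s, dist x a ^ 2) + (2 * inner ℝ (∑ x ∈ s, (x - a)) (a - b)
          + (s.card : ℝ) * ‖a - b‖ ^ 2) := by
        rw [Finset.sum_add_distrib, Finset.sum_add_distrib, ← Finset.mul_sum,
          ← sum_inner, Finset.sum_const, nsmul_eq_mul]
    _ = (∑ x ∈ s, dist x a ^ 2) + (s.card : ℝ) * dist a b ^ 2 := by
        rw [hzero, inner_zero_left, dist_eq_norm]; ring

lemma kmeansCost_nonneg {n : ℕ} (X : Finset (EuclideanSpace ℝ (Fin n))) {k : ℕ}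
    (c : Fin k → EuclideanSpace ℝ (Fin n)) : 0 ≤ kmeansCost X c := by
  apply Finset.sum_nonneg
  intro x _
  exact Real.iInf_nonneg fun i => by positivity

lemma kmeansOPT_le {n : ℕ} (X : Finset (EuclideanSpace ℝ (Fin n))) {k : ℕ}
    (c : Fin k → EuclideanSpace ℝ (Fin n)) : kmeansOPT X k ≤ kmeansCost X c := by
  apply ciInf_le
  exact ⟨0, fun y ⟨c', hc'⟩ => hc' ▸ kmeansCost_nonneg X c'⟩

/-- If X is ε-separated for k-means (ε < 1) then in the optimal k-means clustering the mean
squared radius of each cluster satisfies r_i ≤ (ε²/(1−ε²))·min_{j≠i}‖c_i − c_j‖². -/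
theorem separated_implies_small_radii {n k : ℕ} (hk : 2 ≤ k)
    (X : Finset (EuclideanSpace ℝ (Fin n)))
    (ε : ℝ) (hε0 : 0 < ε) (hε1 : ε < 1)
    (hsep : kmeansOPT X k < ε ^ 2 * kmeansOPT X (k - 1))
    (C : Fin k → Finset (EuclideanSpace ℝ (Fin n)))
    (c : Fin k → EuclideanSpace ℝ (Fin n))
    (hsub : ∀ i, C i ⊆ X) (hcover : ∀ x ∈ X, ∃ i, x ∈ C i)
    (hdisj : ∀ i j, i ≠ j → Disjoint (C i) (C j))
    (hne : ∀ i, (C i).Nonempty)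
    (hcent : ∀ i, c i = (((C i).card : ℝ))⁻¹ • ∑ x ∈ C i, x)
    (hopt : ∑ i, ∑ x ∈ C i, dist x (c i) ^ 2 = kmeansOPT X k) :
    ∀ i j, j ≠ i →
      (((C i).card : ℝ))⁻¹ * (∑ x ∈ C i, dist x (c i) ^ 2) ≤
        ε ^ 2 / (1 - ε ^ 2) * dist (c i) (c j) ^ 2 := by
  classical
  intro i j hj
  have hk1 : k - 1 + 1 = k := Nat.sub_add_cancel (by omega)
  have : NeZero (k - 1) := ⟨by omega⟩
  set N : ℝ := ((C i).card : ℝ) with hN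
  have hNpos : 0 < N := by
    have h := Finset.card_pos.mpr (hne i)
    rw [hN]; exact_mod_cast h
  set D : ℝ := dist (c i) (c j) with hD
  -- merged centers
  set i' : Fin (k - 1 + 1) := Fin.cast hk1.symm i with hi'
  set emb : Fin (k - 1) → Fin k := fun l => Fin.cast hk1 (i'.succAbove l) with hemb
  set g : Fin k → Fin k := fun m => if m = i then j else m with hgdef
  have hgi : g i = j := by simp [hgdef]
  have hgne : ∀ m, m ≠ i → g m = m := fun m h => by simp [hgdef, h]
  have hg : ∀ m, ∃ l, emb l = g m := by
    intro m
    have hne' : Fin.cast hk1.symm (g m) ≠ i' := by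
      by_cases h : m = i
      · rw [h, hgi]
        intro hc
        exact hj (Fin.ext (by simpa [Fin.ext_iff, hi'] using hc))
      · rw [hgne m h]
        intro hc
        exact h (Fin.ext (by simpa [Fin.ext_iff, hi'] using hc))
    obtain ⟨l, hl⟩ := Fin.exists_succAbove_eq hne'
    exact ⟨l, by simp [hemb, hl, Fin.ext_iff]⟩
  set c' : Fin (k - 1) → EuclideanSpace ℝ (Fin n) := fun l => c (emb l) with hc'
  -- partition sum
  have hXU : X = Finset.univ.biUnion C := by
    ext x
    simp only [Finset.mem_biUnion, Finset.mem_univ, true_and]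
    constructor
    · exact hcover x
    · rintro ⟨m, hm⟩; exact hsub m hm
  have hsum : ∀ f : EuclideanSpace ℝ (Fin n) → ℝ,
      ∑ x ∈ X, f x = ∑ m, ∑ x ∈ C m, f x := by
    intro f
    rw [hXU]
    exact Finset.sum_biUnion fun a _ b _ hab => hdisj a b hab
  -- cost bound for merged solution
  have hcost1 : kmeansCost X c' ≤ ∑ m, ∑ x ∈ C m, dist x (c (g m)) ^ 2 := by
    rw [kmeansCost, hsum]
    apply Finset.sum_le_sum
    intro m _
    apply Finset.sum_le_sum
    intro x _
    obtain ⟨l, hl⟩ := hg m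
    calc (⨅ l', dist x (c' l') ^ 2) ≤ dist x (c' l) ^ 2 :=
          ciInf_le (Set.Finite.bddBelow (Set.finite_range _)) l
      _ = dist x (c (g m)) ^ 2 := by
          show dist x (c (emb l)) ^ 2 = dist x (c (g m)) ^ 2
          rw [hl]
  have hterm : ∀ m, ∑ x ∈ C m, dist x (c (g m)) ^ 2 =
      (∑ x ∈ C m, dist x (c m) ^ 2) + (if m = i then N * D ^ 2 else 0) := by
    intro m
    by_cases h : m = i
    · subst h
      rw [hgi, sum_dist_sq_shift (C m) (hne m) (c m) (c j) (hcent m), if_pos rfl,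
        hN, hD]
    · rw [hgne m h, if_neg h, add_zero]
  have hcost2 : ∑ m, ∑ x ∈ C m, dist x (c (g m)) ^ 2 = kmeansOPT X k + N * D ^ 2 := by
    rw [Finset.sum_congr rfl fun m _ => hterm m, Finset.sum_add_distrib, hopt,
      Finset.sum_ite_eq' Finset.univ i (fun _ => N * D ^ 2), if_pos (Finset.mem_univ i)]
  have hmerge : kmeansOPT X (k - 1) ≤ kmeansOPT X k + N * D ^ 2 :=
    le_trans (kmeansOPT_le X c') (le_of_le_of_eq hcost1 hcost2)
  -- algebra
  have hε2 : 0 < 1 - ε ^ 2 := by nlinarith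
  have hOPTlt : kmeansOPT X k < ε ^ 2 / (1 - ε ^ 2) * (N * D ^ 2) := by
    have h1 : kmeansOPT X k < ε ^ 2 * (kmeansOPT X k + N * D ^ 2) := by
      calc kmeansOPT X k < ε ^ 2 * kmeansOPT X (k - 1) := hsep
        _ ≤ ε ^ 2 * (kmeansOPT X k + N * D ^ 2) :=
          mul_le_mul_of_nonneg_left hmerge (by positivity)
    rw [div_mul_eq_mul_div, lt_div_iff₀ hε2]
    nlinarith
  have hle : ∑ x ∈ C i, dist x (c i) ^ 2 ≤ kmeansOPT X k := by
    rw [← hopt]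
    exact Finset.single_le_sum (f := fun m => ∑ x ∈ C m, dist x (c m) ^ 2)
      (fun m _ => Finset.sum_nonneg fun x _ => by positivity) (Finset.mem_univ i)
  have hfinal : ∑ x ∈ C i, dist x (c i) ^ 2 ≤ ε ^ 2 / (1 - ε ^ 2) * (N * D ^ 2) :=
    le_of_lt (lt_of_le_of_lt hle hOPTlt)
  rw [inv_mul_le_iff₀ hNpos]
  calc ∑ x ∈ C i, dist x (c i) ^ 2 ≤ ε ^ 2 / (1 - ε ^ 2) * (N * D ^ 2) := hfinal
    _ = N * (ε ^ 2 / (1 - ε ^ 2) * D ^ 2) := by ring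
end

section
/- If a clustering instance (X,d) is α-center stable for α ≥ 2 + √3, then it satisfies strict separation: for any points x, y in the same optimal cluster and z in a different optimal cluster, d(x,y) < d(x,z). -/
open Finset

/-- If (X,d) is α-center stable for α ≥ 2 + √3, then strict separation holds: points in the
same optimal cluster are strictly closer to each other than to points of other clusters. -/
theorem center_stable_implies_strict_separation {Y : Type*} [MetricSpace Y] {k : ℕ}
    (C : Fin k → Finset Y) (c : Fin k → Y)
    (α : ℝ) (hα : 2 + Real.sqrt 3 ≤ α)
    (hstab : ∀ i, ∀ x ∈ C i, ∀ j, j ≠ i → α * dist x (c i) < dist x (c j)) :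
    ∀ i j, i ≠ j → ∀ x ∈ C i, ∀ y ∈ C i, ∀ z ∈ C j, dist x y < dist x z := by
  intro i j hij x hx y hy z hz
  have h1 : α * dist x (c i) < dist x (c j) := hstab i x hx j (Ne.symm hij)
  have h2 : α * dist y (c i) < dist y (c j) := hstab i y hy j (Ne.symm hij)
  have h3 : α * dist z (c j) < dist z (c i) := hstab j z hz i hij
  have s3 : (Real.sqrt 3) ^ 2 = 3 := Real.sq_sqrt (by norm_num)
  have s3' : (0:ℝ) ≤ Real.sqrt 3 := Real.sqrt_nonneg 3
  have hα3 : 3 ≤ α := by nlinarith [s3, s3']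
  -- key inequality: (α-2)*(α-1) ≥ α+1, i.e. α^2 - 4α + 1 ≥ 0
  have hkey : α + 1 ≤ (α - 2) * (α - 1) := by nlinarith [s3, s3']
  have t1 : dist x y ≤ dist x (c i) + dist y (c i) := dist_triangle_right x y (c i)
  have t2 : dist x (c j) ≤ dist x z + dist z (c j) := dist_triangle x z (c j)
  have t3 : dist z (c i) ≤ dist z x + dist x (c i) := dist_triangle z x (c i)
  have t4 : dist y (c j) ≤ dist y z + dist z (c j) := dist_triangle y z (c j)
  have t5 : dist y z ≤ dist y x + dist x z := dist_triangle y x z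
  have e1 : dist z x = dist x z := dist_comm z x
  have e2 : dist y x = dist x y := dist_comm y x
  set a := dist x (c i)
  set b := dist y (c i)
  set D := dist z (c j)
  set xz := dist x z
  -- L1: (α+1) * xz > (α^2-1) * a
  have hDa : α * D < xz + a := by
    calc α * D < dist z (c i) := h3
    _ ≤ xz + a := by rw [← e1]; exact t3
  have L1 : (α + 1) * xz > (α ^ 2 - 1) * a := by nlinarith [dist_nonneg (x := x) (y := z)]
  -- L2: (α+1) * xz > α*(α-1)*b - (α+1)*a
  have L2 : (α + 1) * xz > α * (α - 1) * b - (α + 1) * a := by nlinarith [t1]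
  have hb : 0 ≤ b := dist_nonneg
  have hfin : (α + 1) * xz > (α + 1) * (a + b) := by nlinarith [hb, hkey]
  have : xz > a + b := by
    have hα1 : (0:ℝ) < α + 1 := by linarith
    exact (mul_lt_mul_iff_right₀ hα1).mp hfin
  linarith
end
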